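/- arXiv:1907.05666 — 5 statements merged into one kernel-verified Lean document; each statement's English description precedes it below -/
import Mathlib

section
/- Let f : (0,∞) → ℝ be a strictly decreasing, convex, differentiable function with lim_{x→+∞} f(x) < 0. Let {L_k}_{k≥1} be a sequence of strictly decreasing, convex, differentiable functions on (0,∞) such that L_k(x) ≤ L_{k+1}(x) ≤ f(x) for all k ≥ 1 and all x ∈ (0,∞), lim_{x→0⁺} L_k(x) > 0 for all k ≥ 1, and lim_{k→∞} L_k(x) = f(x) for every x ∈ (0,∞). Then f has a unique zero x* in (0,∞), and for any initial point x₁ ∈ (0,∞) with L₁(x₁) ≥ 0, the sequence defined by the recursion x_{k+1} = x_k − L_k(x_k)/L_k′(x_k) is monotonically nondecreasing, satisfies x_k ≤ x* for all k, and converges to x*. -/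
open Filter Topology Set

/-- Tangent line of a convex differentiable function lies below the graph. -/
lemma tangent_le_aux {g : ℝ → ℝ} {a b : ℝ} (hg : ConvexOn ℝ (Ioi 0) g)
    (ha : a ∈ Ioi (0:ℝ)) (hb : b ∈ Ioi (0:ℝ)) (hd : DifferentiableAt ℝ g a) :
    g a + deriv g a * (b - a) ≤ g b := by
  rcases lt_trichotomy a b with h | rfl | h
  · have h1 := hg.deriv_le_slope ha hb h hd
    rw [slope_def_field] at h1
    have h2 := (le_div_iff₀ (by linarith : (0:ℝ) < b - a)).mp h1
    linarith
  · simp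
  · have h1 := hg.slope_le_deriv hb ha h hd
    rw [slope_def_field] at h1
    have h2 := (div_le_iff₀ (by linarith : (0:ℝ) < a - b)).mp h1
    nlinarith

/-- A convex strictly decreasing differentiable function has negative derivative. -/
lemma deriv_neg_aux {g : ℝ → ℝ} {a : ℝ} (hg : ConvexOn ℝ (Ioi 0) g)
    (hanti : StrictAntiOn g (Ioi 0)) (ha : a ∈ Ioi (0:ℝ))
    (hd : DifferentiableAt ℝ g a) : deriv g a < 0 := by
  have ha' : (0:ℝ) < a := ha
  have hmem : a + 1 ∈ Ioi (0:ℝ) := by simp; linarith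
  have h1 := hg.deriv_le_slope ha hmem (by linarith) hd
  rw [slope_def_field] at h1
  have h2 : g (a+1) < g a := hanti ha hmem (by linarith)
  have h3 : (g (a+1) - g a) / (a + 1 - a) < 0 := by
    apply div_neg_of_neg_of_pos <;> linarith
  linarith

/-- Modified Newton method on (0,∞): one standard Newton step per iteration on the
`k`-th member of an increasing sequence of lower bounds `L k` for `f`. -/
theorem modified_newton_Ioi
    (f : ℝ → ℝ) (L : ℕ → ℝ → ℝ) (x : ℕ → ℝ) (c : ℝ)
    (hf_anti : StrictAntiOn f (Ioi 0))
    (hf_conv : ConvexOn ℝ (Ioi 0) f)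
    (hf_diff : ∀ y ∈ Ioi (0:ℝ), DifferentiableAt ℝ f y)
    (hc : c < 0) (hf_lim : Tendsto f atTop (𝓝 c))
    (hL_anti : ∀ k ≥ 1, StrictAntiOn (L k) (Ioi 0))
    (hL_conv : ∀ k ≥ 1, ConvexOn ℝ (Ioi 0) (L k))
    (hL_diff : ∀ k ≥ 1, ∀ y ∈ Ioi (0:ℝ), DifferentiableAt ℝ (L k) y)
    (hL_mono : ∀ k ≥ 1, ∀ y ∈ Ioi (0:ℝ), L k y ≤ L (k+1) y)
    (hL_le : ∀ k ≥ 1, ∀ y ∈ Ioi (0:ℝ), L k y ≤ f y)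
    (hL_lim0 : ∀ k ≥ 1, ∃ ck > (0:ℝ), Tendsto (L k) (𝓝[>] (0:ℝ)) (𝓝 ck))
    (hL_limk : ∀ y ∈ Ioi (0:ℝ), Tendsto (fun k => L k y) atTop (𝓝 (f y)))
    (hx1 : x 1 ∈ Ioi (0:ℝ)) (hL1 : 0 ≤ L 1 (x 1))
    (hrec : ∀ k ≥ 1, x (k+1) = x k - L k (x k) / deriv (L k) (x k)) :
    ∃ xs ∈ Ioi (0:ℝ), f xs = 0 ∧ (∀ y ∈ Ioi (0:ℝ), f y = 0 → y = xs) ∧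
      (∀ k ≥ 1, x k ≤ x (k+1)) ∧ (∀ k ≥ 1, x k ≤ xs) ∧
      Tendsto x atTop (𝓝 xs) := by
  have hx1pos : (0:ℝ) < x 1 := hx1
  have hfx1 : 0 ≤ f (x 1) := le_trans hL1 (hL_le 1 le_rfl _ hx1)
  -- find B with f B < 0
  obtain ⟨B, hfB, hBgt⟩ : ∃ B, f B < 0 ∧ x 1 < B :=
    ((hf_lim.eventually_lt_const hc).and (eventually_gt_atTop (x 1))).exists
  have hIcc_sub : Icc (x 1) B ⊆ Ioi (0:ℝ) := fun y hy => lt_of_lt_of_le hx1pos hy.1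
  have hcont : ContinuousOn f (Icc (x 1) B) := fun y hy =>
    (hf_diff y (hIcc_sub hy)).continuousAt.continuousWithinAt
  obtain ⟨xs, hxsIcc, hxs0⟩ : ∃ xs ∈ Icc (x 1) B, f xs = 0 := by
    have := intermediate_value_Icc' (le_of_lt hBgt) hcont
    have h0 : (0:ℝ) ∈ Icc (f B) (f (x 1)) := ⟨le_of_lt hfB, hfx1⟩
    obtain ⟨xs, hxs, hfxs⟩ := this h0
    exact ⟨xs, hxs, hfxs⟩
  have hxsIoi : xs ∈ Ioi (0:ℝ) := hIcc_sub hxsIcc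
  -- uniqueness
  have huniq : ∀ y ∈ Ioi (0:ℝ), f y = 0 → y = xs := fun y hy hfy =>
    hf_anti.injOn hy hxsIoi (by rw [hfy, hxs0])
  -- the key invariant
  have key : ∀ k, 1 ≤ k → 0 < x k ∧ 0 ≤ L k (x k) := by
    refine Nat.le_induction ⟨hx1pos, hL1⟩ ?_
    intro k hk ⟨hxk, hLk⟩
    have hxkIoi : x k ∈ Ioi (0:ℝ) := hxk
    have hd := deriv_neg_aux (hL_conv k hk) (hL_anti k hk) hxkIoi (hL_diff k hk _ hxkIoi)
    have hstep : 0 ≤ -(L k (x k) / deriv (L k) (x k)) := by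
      rw [neg_nonneg]
      exact div_nonpos_of_nonneg_of_nonpos hLk (le_of_lt hd)
    have hxk1 : x k ≤ x (k+1) := by rw [hrec k hk]; linarith
    have hxk1pos : 0 < x (k+1) := lt_of_lt_of_le hxk hxk1
    have hxk1Ioi : x (k+1) ∈ Ioi (0:ℝ) := hxk1pos
    -- tangent line at x k evaluated at x (k+1):
    have htan := tangent_le_aux (hL_conv k hk) hxkIoi hxk1Ioi (hL_diff k hk _ hxkIoi)
    have hval : deriv (L k) (x k) * (x (k+1) - x k) = -(L k (x k)) := by
      rw [hrec k hk]
      have he : x k - L k (x k) / deriv (L k) (x k) - x k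
          = -(L k (x k) / deriv (L k) (x k)) := by ring
      rw [he, mul_neg, mul_div_cancel₀ _ (ne_of_lt hd)]
    have hLk1 : 0 ≤ L k (x (k+1)) := by linarith
    exact ⟨hxk1pos, le_trans hLk1 (hL_mono k hk _ hxk1Ioi)⟩
  have hmono : ∀ k ≥ 1, x k ≤ x (k+1) := by
    intro k hk
    obtain ⟨hxk, hLk⟩ := key k hk
    have hd := deriv_neg_aux (hL_conv k hk) (hL_anti k hk) hxk (hL_diff k hk _ hxk)
    have hstep : L k (x k) / deriv (L k) (x k) ≤ 0 :=
      div_nonpos_of_nonneg_of_nonpos hLk (le_of_lt hd)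
    rw [hrec k hk]; linarith
  -- bound by xs
  have hbound : ∀ k ≥ 1, x k ≤ xs := by
    refine Nat.le_induction hxsIcc.1 ?_
    intro k hk _
    obtain ⟨hxk, hLk⟩ := key k hk
    have hxkIoi : x k ∈ Ioi (0:ℝ) := hxk
    have hd := deriv_neg_aux (hL_conv k hk) (hL_anti k hk) hxkIoi (hL_diff k hk _ hxkIoi)
    have htan := tangent_le_aux (hL_conv k hk) hxkIoi hxsIoi (hL_diff k hk _ hxkIoi)
    have hLxs : L k xs ≤ 0 := by
      have := hL_le k hk xs hxsIoi; rw [hxs0] at this; exact this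
    -- L k (x k) + d * (xs - x k) ≤ 0, d < 0 ⇒ xs ≥ x k - L k (x k) / d
    have h1 : deriv (L k) (x k) * (xs - x k) ≤ -(L k (x k)) := by linarith
    have h2 : -(L k (x k)) / deriv (L k) (x k) ≤ xs - x k := by
      rw [div_le_iff_of_neg hd]; linarith [h1]
    rw [hrec k hk]
    have : x k - L k (x k) / deriv (L k) (x k) = x k + -(L k (x k)) / deriv (L k) (x k) := by
      ring
    rw [this]; linarith
  -- convergence
  set y : ℕ → ℝ := fun k => x (k+1) with hy
  have hymono : Monotone y := monotone_nat_of_le_succ fun n => hmono (n+1) (by omega)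
  have hybdd : BddAbove (Set.range y) := ⟨xs, by rintro _ ⟨n, rfl⟩; exact hbound (n+1) (by omega)⟩
  set l : ℝ := ⨆ k, y k with hl
  have hytend : Tendsto y atTop (𝓝 l) := tendsto_atTop_ciSup hymono hybdd
  have hxtend : Tendsto x atTop (𝓝 l) := (tendsto_add_atTop_iff_nat 1).mp hytend
  have hllexs : l ≤ xs := ciSup_le fun k => hbound (k+1) (by omega)
  have hx1lel : x 1 ≤ l := le_ciSup hybdd 0
  have hlpos : (0:ℝ) < l := lt_of_lt_of_le hx1pos hx1lel
  have hlIoi : l ∈ Ioi (0:ℝ) := hlpos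
  -- x 1 ≤ x k for k ≥ 1
  have hgrow : ∀ k ≥ 1, x 1 ≤ x k :=
    Nat.le_induction le_rfl (fun k hk ih => le_trans ih (hmono k hk))
  -- monotonicity in the index of L
  have hLidx : ∀ m ≥ 1, ∀ k, m ≤ k → ∀ z ∈ Ioi (0:ℝ), L m z ≤ L k z := by
    intro m hm
    refine Nat.le_induction (fun z _ => le_rfl) ?_
    intro k hk ih z hz
    exact le_trans (ih z hz) (hL_mono k (le_trans hm hk) z hz)
  -- L k (x k) → 0
  have hdiff0 : Tendsto (fun k => x (k+1) - x k) atTop (𝓝 0) := by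
    have := hytend.sub hxtend
    simpa using this
  have ha2 : x 1 / 2 ∈ Ioi (0:ℝ) := by simp; linarith
  have hfapos : 0 < f (x 1 / 2) := by
    have hlt : x 1 / 2 < xs := lt_of_lt_of_le (by linarith) hxsIcc.1
    have := hf_anti ha2 hxsIoi hlt
    rw [hxs0] at this; exact this
  set M : ℝ := f (x 1 / 2) / (x 1 / 2) with hM
  have hMbound : ∀ k ≥ 1, L k (x k) ≤ M * (x (k+1) - x k) := by
    intro k hk
    obtain ⟨hxk, hLk⟩ := key k hk
    have hxkIoi : x k ∈ Ioi (0:ℝ) := hxk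
    have hx1lexk : x 1 ≤ x k := hgrow k hk
    have hd := deriv_neg_aux (hL_conv k hk) (hL_anti k hk) hxkIoi (hL_diff k hk _ hxkIoi)
    have hlt : x 1 / 2 < x k := by linarith
    have h1 := (hL_conv k hk).slope_le_deriv ha2 hxkIoi hlt (hL_diff k hk _ hxkIoi)
    rw [slope_def_field] at h1
    have hden : (0:ℝ) < x k - x 1 / 2 := by linarith
    have hnum : L k (x 1 / 2) - L k (x k) ≤ f (x 1 / 2) := by
      have := hL_le k hk _ ha2; linarith
    have h2 : -(deriv (L k) (x k)) ≤ (L k (x 1 / 2) - L k (x k)) / (x k - x 1 / 2) := by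
      have heq : (L k (x 1 / 2) - L k (x k)) / (x k - x 1 / 2)
          = -((L k (x k) - L k (x 1 / 2)) / (x k - x 1 / 2)) := by ring
      rw [heq]; linarith
    have h3 : (L k (x 1 / 2) - L k (x k)) / (x k - x 1 / 2) ≤ M := by
      exact div_le_div₀ (le_of_lt hfapos) hnum (by linarith) (by linarith)
    have h4 : -(deriv (L k) (x k)) ≤ M := le_trans h2 h3
    have hval : deriv (L k) (x k) * (x (k+1) - x k) = -(L k (x k)) := by
      rw [hrec k hk]
      have he : x k - L k (x k) / deriv (L k) (x k) - x k
          = -(L k (x k) / deriv (L k) (x k)) := by ring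
      rw [he, mul_neg, mul_div_cancel₀ _ (ne_of_lt hd)]
    have hLeq : L k (x k) = -(deriv (L k) (x k)) * (x (k+1) - x k) := by
      rw [neg_mul]; linarith
    rw [hLeq]
    have hdiffnn : 0 ≤ x (k+1) - x k := by linarith [hmono k hk]
    exact mul_le_mul_of_nonneg_right h4 hdiffnn
  have hL0 : Tendsto (fun k => L k (x k)) atTop (𝓝 0) := by
    have hMt : Tendsto (fun k => M * (x (k+1) - x k)) atTop (𝓝 0) := by
      have := hdiff0.const_mul M
      simpa using this
    refine tendsto_of_tendsto_of_tendsto_of_le_of_le' tendsto_const_nhds hMt ?_ ?_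
    · filter_upwards [eventually_ge_atTop 1] with k hk
      exact (key k hk).2
    · filter_upwards [eventually_ge_atTop 1] with k hk
      exact hMbound k hk
  -- L m l ≤ 0 for each m ≥ 1
  have hLml : ∀ m ≥ 1, L m l ≤ 0 := by
    intro m hm
    have hcm : Tendsto (fun k => L m (x k)) atTop (𝓝 (L m l)) :=
      ((hL_diff m hm l hlIoi).continuousAt.tendsto).comp hxtend
    refine le_of_tendsto_of_tendsto hcm hL0 ?_
    filter_upwards [eventually_ge_atTop m, eventually_ge_atTop 1] with k hkm hk1
    exact hLidx m hm k hkm (x k) (key k hk1).1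
  have hfl : f l ≤ 0 := by
    refine le_of_tendsto (hL_limk l hlIoi) ?_
    filter_upwards [eventually_ge_atTop 1] with m hm
    exact hLml m hm
  have hleq : l = xs := by
    rcases lt_or_eq_of_le hllexs with h | h
    · exfalso
      have := hf_anti hlIoi hxsIoi h
      rw [hxs0] at this; linarith
    · exact h
  rw [hleq] at hxtend
  exact ⟨xs, hxsIoi, hxs0, huniq, hmono, hbound, hxtend⟩
end

section
/- Let M be a real symmetric positive semidefinite m×m matrix and b ∈ ℝᵐ with Mb ≠ 0. Then the function g(α) = α² bᵀ(M + αI)⁻²b is strictly increasing on (0,∞). -/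
open Matrix Set

section Aux
variable {m : ℕ}

lemma discrepancy_diag_conj (M : Matrix (Fin m) (Fin m) ℝ) (hH : M.IsHermitian) (α : ℝ) :
    M + α • (1 : Matrix (Fin m) (Fin m) ℝ) =
      (hH.eigenvectorUnitary : Matrix (Fin m) (Fin m) ℝ) *
        diagonal (fun i => hH.eigenvalues i + α) *
        star (hH.eigenvectorUnitary : Matrix (Fin m) (Fin m) ℝ) := by
  set U := (hH.eigenvectorUnitary : Matrix (Fin m) (Fin m) ℝ)
  have hU : U * star U = 1 := Matrix.mem_unitaryGroup_iff.mp hH.eigenvectorUnitary.2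
  have h1 : diagonal (fun i => hH.eigenvalues i + α) =
      diagonal hH.eigenvalues + α • 1 := by
    simp [Matrix.diagonal_add, Matrix.smul_eq_diagonal_mul]
  rw [h1, Matrix.mul_add, Matrix.add_mul]
  congr 1
  · simpa using hH.spectral_theorem
  · rw [Matrix.mul_smul, Matrix.smul_mul, mul_one, hU]

lemma discrepancy_inv_sq (M : Matrix (Fin m) (Fin m) ℝ) (hH : M.IsHermitian)
    (hev : ∀ i, 0 ≤ hH.eigenvalues i) {α : ℝ} (hα : 0 < α) :
    (M + α • (1 : Matrix (Fin m) (Fin m) ℝ))⁻¹ *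
      (M + α • (1 : Matrix (Fin m) (Fin m) ℝ))⁻¹ =
      (hH.eigenvectorUnitary : Matrix (Fin m) (Fin m) ℝ) *
        diagonal (fun i => ((hH.eigenvalues i + α) ^ 2)⁻¹) *
        star (hH.eigenvectorUnitary : Matrix (Fin m) (Fin m) ℝ) := by
  set U := (hH.eigenvectorUnitary : Matrix (Fin m) (Fin m) ℝ)
  have hU : U * star U = 1 := Matrix.mem_unitaryGroup_iff.mp hH.eigenvectorUnitary.2
  have hU' : star U * U = 1 := Matrix.mem_unitaryGroup_iff'.mp hH.eigenvectorUnitary.2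
  have hne : ∀ i, hH.eigenvalues i + α ≠ 0 :=
    fun i => (add_pos_of_nonneg_of_pos (hev i) hα).ne'
  have hinv : (M + α • (1 : Matrix (Fin m) (Fin m) ℝ))⁻¹ =
      U * diagonal (fun i => (hH.eigenvalues i + α)⁻¹) * star U := by
    apply Matrix.inv_eq_right_inv
    rw [discrepancy_diag_conj M hH α]
    calc U * diagonal (fun i => hH.eigenvalues i + α) * star U *
          (U * diagonal (fun i => (hH.eigenvalues i + α)⁻¹) * star U)
        = U * (diagonal (fun i => hH.eigenvalues i + α) *
            diagonal (fun i => (hH.eigenvalues i + α)⁻¹)) * star U := by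
          rw [Matrix.mul_assoc, Matrix.mul_assoc, Matrix.mul_assoc, Matrix.mul_assoc]
          rw [← Matrix.mul_assoc (star U), hU', Matrix.one_mul, Matrix.mul_assoc]
      _ = 1 := by
          rw [Matrix.diagonal_mul_diagonal]
          have h2 : (fun i => (hH.eigenvalues i + α) * (hH.eigenvalues i + α)⁻¹) =
              fun _ => (1:ℝ) := by
            funext i; exact mul_inv_cancel₀ (hne i)
          rw [h2, Matrix.diagonal_one, Matrix.mul_one, hU]
  rw [hinv]
  calc U * diagonal (fun i => (hH.eigenvalues i + α)⁻¹) * star U *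
        (U * diagonal (fun i => (hH.eigenvalues i + α)⁻¹) * star U)
      = U * (diagonal (fun i => (hH.eigenvalues i + α)⁻¹) *
          diagonal (fun i => (hH.eigenvalues i + α)⁻¹)) * star U := by
        rw [Matrix.mul_assoc, Matrix.mul_assoc, Matrix.mul_assoc, Matrix.mul_assoc]
        rw [← Matrix.mul_assoc (star U), hU', Matrix.one_mul, Matrix.mul_assoc]
    _ = _ := by
        rw [Matrix.diagonal_mul_diagonal]
        have h2 : (fun i => (hH.eigenvalues i + α)⁻¹ * (hH.eigenvalues i + α)⁻¹) =
            fun i => ((hH.eigenvalues i + α) ^ 2)⁻¹ := by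
          funext i; rw [← mul_inv, sq]
        rw [h2]

lemma discrepancy_dot_mulVec (U : Matrix (Fin m) (Fin m) ℝ) (b x : Fin m → ℝ) :
    b ⬝ᵥ (U *ᵥ x) = (star U *ᵥ b) ⬝ᵥ x := by
  rw [Matrix.dotProduct_mulVec, Matrix.star_eq_conjTranspose]
  congr 1
  ext i
  simp [Matrix.vecMul, Matrix.mulVec, Matrix.conjTranspose, dotProduct, mul_comm]

lemma discrepancy_quad_form (U : Matrix (Fin m) (Fin m) ℝ) (d : Fin m → ℝ) (b : Fin m → ℝ) :
    b ⬝ᵥ ((U * diagonal d * star U) *ᵥ b) =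
      ∑ i, d i * ((star U *ᵥ b) i) ^ 2 := by
  rw [← Matrix.mulVec_mulVec, ← Matrix.mulVec_mulVec, discrepancy_dot_mulVec]
  simp [dotProduct, Matrix.mulVec_diagonal, sq]
  apply Finset.sum_congr rfl
  intro i _
  ring

end Aux

/-- For a symmetric positive semidefinite `M` and `b` with `Mb ≠ 0`, the
discrepancy function `g(α) = α² bᵀ(M + αI)⁻²b` is strictly increasing on `(0,∞)`. -/
theorem discrepancy_strictMonoOn
    (m : ℕ) (M : Matrix (Fin m) (Fin m) ℝ) (b : Fin m → ℝ)
    (hM : M.PosSemidef) (hMb : M *ᵥ b ≠ 0) :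
    StrictMonoOn
      (fun α : ℝ => α ^ 2 *
        (b ⬝ᵥ (((M + α • (1 : Matrix (Fin m) (Fin m) ℝ))⁻¹
          * (M + α • (1 : Matrix (Fin m) (Fin m) ℝ))⁻¹) *ᵥ b)))
      (Ioi 0) := by
  have hH := hM.1
  set U := (hH.eigenvectorUnitary : Matrix (Fin m) (Fin m) ℝ) with hUdef
  set μ := hH.eigenvalues with hμdef
  set w := star U *ᵥ b with hwdef
  have hev : ∀ i, 0 ≤ μ i := fun i => hM.eigenvalues_nonneg i
  -- rewrite g
  have hg : ∀ α : ℝ, 0 < α →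
      (α ^ 2 * (b ⬝ᵥ (((M + α • (1 : Matrix (Fin m) (Fin m) ℝ))⁻¹
          * (M + α • (1 : Matrix (Fin m) (Fin m) ℝ))⁻¹) *ᵥ b)))
        = ∑ i, (w i) ^ 2 * (α ^ 2 * ((μ i + α) ^ 2)⁻¹) := by
    intro α hα
    rw [discrepancy_inv_sq M hH hev hα, discrepancy_quad_form, Finset.mul_sum]
    apply Finset.sum_congr rfl
    intro i _
    ring
  -- existence of an eigenvalue-positive coordinate
  have hex : ∃ i, 0 < μ i ∧ w i ≠ 0 := by
    by_contra h
    push_neg at h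
    apply hMb
    have hMeq : M = U * diagonal μ * star U := by simpa using hH.spectral_theorem
    have hz : diagonal μ *ᵥ w = 0 := by
      ext i
      rw [Matrix.mulVec_diagonal]
      rcases eq_or_lt_of_le (hev i) with h0 | h0
      · simp [← h0]
      · simp [h i h0]
    have hU' : star U * U = 1 := Matrix.mem_unitaryGroup_iff'.mp hH.eigenvectorUnitary.2
    calc M *ᵥ b = U *ᵥ (diagonal μ *ᵥ (star U *ᵥ b)) := by
          rw [hMeq, ← Matrix.mulVec_mulVec, ← Matrix.mulVec_mulVec]
      _ = 0 := by rw [← hwdef, hz, Matrix.mulVec_zero]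
  obtain ⟨j, hμj, hwj⟩ := hex
  -- strict monotonicity
  intro α hα β hβ hab
  simp only at *
  rw [hg α hα, hg β hβ]
  have key : ∀ i, 0 ≤ μ i → α ^ 2 * ((μ i + α) ^ 2)⁻¹ ≤ β ^ 2 * ((μ i + β) ^ 2)⁻¹ := by
    intro i hi
    have h1 : 0 < μ i + α := add_pos_of_nonneg_of_pos hi hα
    have h2 : 0 < μ i + β := add_pos_of_nonneg_of_pos hi (hα.trans hab)
    rw [← div_eq_mul_inv, ← div_eq_mul_inv, div_le_div_iff₀ (by positivity) (by positivity)]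
    have hβ' : (0:ℝ) < β := hα.trans hab
    have hA : 0 ≤ β * (μ i + α) - α * (μ i + β) := by nlinarith
    have hα' : (0:ℝ) < α := hα
    have hB : 0 < β * (μ i + α) + α * (μ i + β) := add_pos (mul_pos hβ' h1) (mul_pos hα' h2)
    nlinarith [mul_nonneg hA hB.le]
  apply Finset.sum_lt_sum
  · intro i _
    exact mul_le_mul_of_nonneg_left (key i (hev i)) (sq_nonneg _)
  · refine ⟨j, Finset.mem_univ j, ?_⟩
    have hwj2 : 0 < (w j) ^ 2 := by positivity
    have h1 : 0 < μ j + α := add_pos_of_nonneg_of_pos (hev j) hα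
    have h2 : 0 < μ j + β := add_pos_of_nonneg_of_pos (hev j) (hα.trans hab)
    have hstrict : α ^ 2 * ((μ j + α) ^ 2)⁻¹ < β ^ 2 * ((μ j + β) ^ 2)⁻¹ := by
      rw [← div_eq_mul_inv, ← div_eq_mul_inv, div_lt_div_iff₀ (by positivity) (by positivity)]
      have hβ' : (0:ℝ) < β := hα.trans hab
      have hA : 0 < β * (μ j + α) - α * (μ j + β) := by nlinarith [mul_pos hμj (sub_pos.mpr hab)]
      have hα' : (0:ℝ) < α := hα
      have hB : 0 < β * (μ j + α) + α * (μ j + β) := add_pos (mul_pos hβ' h1) (mul_pos hα' h2)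
      nlinarith [mul_pos hA hB]
    exact mul_lt_mul_of_pos_left hstrict hwj2
end

section
/- Let M be a real symmetric positive semidefinite m×m matrix and b ∈ ℝᵐ, and let g(α) = α² bᵀ(M + αI)⁻²b for α > 0. Then g(α) → ‖b‖² as α → +∞, and g(α) → ‖Pb‖² as α → 0⁺, where P denotes the orthogonal projection of ℝᵐ onto the kernel of M and ‖·‖ is the Euclidean norm. -/
open Matrix Set Filter Topology

/-!
Diagonalise `M = U diag(d) Uᵀ` with `U` orthogonal and `d ≥ 0`. In the coordinates `c = Uᵀ b`
the function becomes `g(α) = ∑ cᵢ² (α / (dᵢ + α))²`, and each factor `α / (dᵢ + α)` tends to `1`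
as `α → ∞`, while as `α → 0⁺` it tends to `1` if `dᵢ = 0` and to `0` otherwise. The two conditions
on `p` say precisely that `Uᵀ p` keeps the coordinates `cᵢ` with `dᵢ = 0` and has all other
coordinates zero, so `‖p‖² = ∑_{dᵢ = 0} cᵢ²`.
-/

namespace Matrix

variable {n : Type*} [Fintype n] [DecidableEq n]

section CommRing

variable {R : Type*} [CommRing R] {U : Matrix n n R}

theorem dotProduct_mul_diagonal_mul_transpose_mulVec (U : Matrix n n R) (d x : n → R) :
    x ⬝ᵥ ((U * diagonal d * Uᵀ) *ᵥ x) = ∑ i, d i * (Uᵀ *ᵥ x) i ^ 2 := by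
  rw [← mulVec_mulVec, ← mulVec_mulVec, dotProduct_mulVec, ← mulVec_transpose]
  simp only [dotProduct, mulVec_diagonal]
  exact Finset.sum_congr rfl fun i _ => by ring

theorem sum_sq_transpose_mulVec (hU : Uᵀ * U = 1) (x : n → R) :
    ∑ i, (Uᵀ *ᵥ x) i ^ 2 = ∑ i, x i ^ 2 := by
  have h := dotProduct_mul_diagonal_mul_transpose_mulVec U (fun _ => 1) x
  rw [diagonal_one, Matrix.mul_one, mul_eq_one_comm.mp hU, one_mulVec] at h
  simpa [dotProduct, sq] using h.symm

theorem mul_diagonal_mul_transpose_mul_mul_diagonal_mul_transpose (hU : Uᵀ * U = 1)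
    (d e : n → R) :
    U * diagonal d * Uᵀ * (U * diagonal e * Uᵀ) = U * diagonal (d * e) * Uᵀ := by
  calc U * diagonal d * Uᵀ * (U * diagonal e * Uᵀ)
      = U * (diagonal d * (Uᵀ * U) * diagonal e) * Uᵀ := by simp only [Matrix.mul_assoc]
    _ = U * diagonal (d * e) * Uᵀ := by
      rw [hU, Matrix.mul_one, diagonal_mul_diagonal]; rfl

theorem mul_diagonal_mul_transpose_add_smul_one (hU : Uᵀ * U = 1) (d : n → R) (α : R) :
    U * diagonal d * Uᵀ + α • 1 = U * diagonal (fun i => d i + α) * Uᵀ := by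
  rw [← diagonal_add, Matrix.mul_add, Matrix.add_mul, ← smul_one_eq_diagonal, Matrix.mul_smul,
    Matrix.smul_mul, Matrix.mul_one, mul_eq_one_comm.mp hU]

theorem mul_diagonal_mul_transpose_mulVec_col_eq_zero (hU : Uᵀ * U = 1) {d : n → R} {i : n}
    (hi : d i = 0) : (U * diagonal d * Uᵀ) *ᵥ U.col i = 0 := by
  rw [← mulVec_single_one, mulVec_mulVec, Matrix.mul_assoc, hU, Matrix.mul_one, ← mulVec_mulVec,
    diagonal_mulVec_single, hi, zero_mul, Pi.single_zero, mulVec_zero]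

end CommRing

section Field

variable {K : Type*} [Field K] {U : Matrix n n K}

theorem inv_mul_diagonal_mul_transpose_add_smul_one (hU : Uᵀ * U = 1) {d : n → K} {α : K}
    (hdα : ∀ i, d i + α ≠ 0) :
    (U * diagonal d * Uᵀ + α • 1)⁻¹ = U * diagonal (fun i => (d i + α)⁻¹) * Uᵀ := by
  refine inv_eq_left_inv ?_
  rw [mul_diagonal_mul_transpose_add_smul_one hU,
    mul_diagonal_mul_transpose_mul_mul_diagonal_mul_transpose hU]
  have hprod : ((fun i => (d i + α)⁻¹) * fun i => d i + α) = 1 :=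
    funext fun i => inv_mul_cancel₀ (hdα i)
  rw [hprod, Pi.one_def, diagonal_one, Matrix.mul_one, mul_eq_one_comm.mp hU]

theorem sq_mul_dotProduct_inv_mul_inv_mulVec (hU : Uᵀ * U = 1) {d : n → K} {α : K}
    (hdα : ∀ i, d i + α ≠ 0) (b : n → K) :
    α ^ 2 * (b ⬝ᵥ (((U * diagonal d * Uᵀ + α • 1)⁻¹ * (U * diagonal d * Uᵀ + α • 1)⁻¹) *ᵥ b))
      = ∑ i, (Uᵀ *ᵥ b) i ^ 2 * (α / (d i + α)) ^ 2 := by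
  rw [inv_mul_diagonal_mul_transpose_add_smul_one hU hdα,
    mul_diagonal_mul_transpose_mul_mul_diagonal_mul_transpose hU,
    dotProduct_mul_diagonal_mul_transpose_mulVec, Finset.mul_sum]
  refine Finset.sum_congr rfl fun i _ => ?_
  simp only [Pi.mul_apply, div_eq_mul_inv]
  ring

theorem transpose_mulVec_apply_eq_zero_of_mulVec_eq_zero (hU : Uᵀ * U = 1) {d q : n → K}
    (hq : (U * diagonal d * Uᵀ) *ᵥ q = 0) {i : n} (hi : d i ≠ 0) : (Uᵀ *ᵥ q) i = 0 := by
  have h : diagonal d *ᵥ (Uᵀ *ᵥ q) = 0 := by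
    rw [← mulVec_zero Uᵀ, ← hq, mulVec_mulVec, mulVec_mulVec, ← Matrix.mul_assoc,
      ← Matrix.mul_assoc, hU, Matrix.one_mul]
  simpa [mulVec_diagonal, hi] using congrFun h i

theorem transpose_mulVec_apply_of_orthogonal_projection [DecidableEq K] (hU : Uᵀ * U = 1)
    {d b p : n → K} (hp_ker : (U * diagonal d * Uᵀ) *ᵥ p = 0)
    (hp_orth : ∀ q, (U * diagonal d * Uᵀ) *ᵥ q = 0 → (b - p) ⬝ᵥ q = 0) (i : n) :
    (Uᵀ *ᵥ p) i = if d i = 0 then (Uᵀ *ᵥ b) i else 0 := by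
  split_ifs with hi
  · have h := hp_orth _ (mul_diagonal_mul_transpose_mulVec_col_eq_zero hU hi)
    rwa [← mulVec_single_one, dotProduct_mulVec, ← mulVec_transpose, dotProduct_single_one,
      mulVec_sub, Pi.sub_apply, sub_eq_zero, eq_comm] at h
  · exact transpose_mulVec_apply_eq_zero_of_mulVec_eq_zero hU hp_ker hi

end Field

theorem PosSemidef.exists_orthogonal_diagonalization {M : Matrix n n ℝ} (hM : M.PosSemidef) :
    ∃ (U : Matrix n n ℝ) (d : n → ℝ), Uᵀ * U = 1 ∧ (∀ i, 0 ≤ d i) ∧ M = U * diagonal d * Uᵀ := by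
  have hH := hM.isHermitian
  refine ⟨hH.eigenvectorUnitary, hH.eigenvalues, ?_, hM.eigenvalues_nonneg, ?_⟩
  · simpa [star_eq_conjTranspose] using mem_unitaryGroup_iff'.mp hH.eigenvectorUnitary.2
  · simpa [Unitary.conjStarAlgAut_apply, star_eq_conjTranspose] using hH.spectral_theorem

theorem tendsto_sq_mul_dotProduct_inv_mul_inv_mulVec {U : Matrix n n ℝ} (hU : Uᵀ * U = 1)
    {d : n → ℝ} (hd : ∀ i, 0 ≤ d i) {l : Filter ℝ} (hl : ∀ᶠ α in l, 0 < α) {L : n → ℝ}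
    (hL : ∀ i, Tendsto (fun α => α / (d i + α)) l (𝓝 (L i))) (b : n → ℝ) :
    Tendsto (fun α : ℝ =>
        α ^ 2 * (b ⬝ᵥ (((U * diagonal d * Uᵀ + α • 1)⁻¹ * (U * diagonal d * Uᵀ + α • 1)⁻¹) *ᵥ b)))
      l (𝓝 (∑ i, (Uᵀ *ᵥ b) i ^ 2 * L i ^ 2)) := by
  refine Tendsto.congr' ?_ (tendsto_finsetSum _ fun i _ => ((hL i).pow 2).const_mul _)
  filter_upwards [hl] with α hα
  exact (sq_mul_dotProduct_inv_mul_inv_mulVec hU (fun i => (by positivity [hd i])) b).symm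

end Matrix

theorem tendsto_div_add_atTop (d : ℝ) : Tendsto (fun α : ℝ => α / (d + α)) atTop (𝓝 1) := by
  have h0 : Tendsto (fun α : ℝ => d * α⁻¹) atTop (𝓝 0) := by
    simpa using tendsto_inv_atTop_zero.const_mul d
  have h : Tendsto (fun α : ℝ => (d * α⁻¹ + 1)⁻¹) atTop (𝓝 1) := by
    simpa using (h0.add_const 1).inv₀ (by norm_num)
  refine h.congr' ?_
  filter_upwards [eventually_gt_atTop 0] with α hα
  field_simp

theorem tendsto_div_add_nhdsGT_zero (d : ℝ) :
    Tendsto (fun α : ℝ => α / (d + α)) (𝓝[>] 0) (𝓝 (if d = 0 then 1 else 0)) := by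
  split_ifs with hd
  · refine tendsto_const_nhds.congr' ?_
    filter_upwards [self_mem_nhdsWithin] with α (hα : 0 < α)
    rw [hd, zero_add, div_self hα.ne']
  · have h : Tendsto (fun α : ℝ => α / (d + α)) (𝓝 0) (𝓝 (0 / (d + 0))) :=
      tendsto_id.div (tendsto_const_nhds.add tendsto_id) (by simpa)
    simpa using h.mono_left nhdsWithin_le_nhds

/-- Limits of the discrepancy function `g(α) = α² bᵀ(M + αI)⁻²b`:
`g(α) → ‖b‖²` as `α → +∞` and `g(α) → ‖Pb‖²` as `α → 0⁺`, where `p = Pb` is the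
orthogonal projection of `b` onto the kernel of `M` (characterized by `Mp = 0`
and `b − p` orthogonal to the kernel of `M`). -/
theorem discrepancy_limits
    (m : ℕ) (M : Matrix (Fin m) (Fin m) ℝ) (b p : Fin m → ℝ)
    (hM : M.PosSemidef)
    (hp_ker : M *ᵥ p = 0)
    (hp_orth : ∀ q : Fin m → ℝ, M *ᵥ q = 0 → (b - p) ⬝ᵥ q = 0) :
    Tendsto
      (fun α : ℝ => α ^ 2 *
        (b ⬝ᵥ (((M + α • (1 : Matrix (Fin m) (Fin m) ℝ))⁻¹
          * (M + α • (1 : Matrix (Fin m) (Fin m) ℝ))⁻¹) *ᵥ b)))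
      atTop (𝓝 (∑ i, b i ^ 2)) ∧
    Tendsto
      (fun α : ℝ => α ^ 2 *
        (b ⬝ᵥ (((M + α • (1 : Matrix (Fin m) (Fin m) ℝ))⁻¹
          * (M + α • (1 : Matrix (Fin m) (Fin m) ℝ))⁻¹) *ᵥ b)))
      (𝓝[>] (0:ℝ)) (𝓝 (∑ i, p i ^ 2)) := by
  obtain ⟨U, d, hU, hd, rfl⟩ := hM.exists_orthogonal_diagonalization
  constructor
  · convert tendsto_sq_mul_dotProduct_inv_mul_inv_mulVec hU hd (eventually_gt_atTop 0)
      (fun i => tendsto_div_add_atTop (d i)) b using 2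
    simp [← sum_sq_transpose_mulVec hU b]
  · convert tendsto_sq_mul_dotProduct_inv_mul_inv_mulVec hU hd
      (eventually_nhdsWithin_of_forall (s := Ioi 0) fun _ h => h)
      (fun i => tendsto_div_add_nhdsGT_zero (d i)) b using 2
    rw [← sum_sq_transpose_mulVec hU p]
    refine Finset.sum_congr rfl fun i _ => ?_
    rw [transpose_mulVec_apply_of_orthogonal_projection hU hp_ker hp_orth i]
    split_ifs <;> simp
end

section
/- Let M be a real symmetric positive semidefinite m×m matrix and b ∈ ℝᵐ. Then the function ĝ(β) = bᵀ(βM + I)⁻²b is convex and nonincreasing on (0,∞); moreover, if Mb ≠ 0, then ĝ is strictly decreasing on (0,∞). -/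
open Matrix Set

/-- After the change of variable `β = 1/α`, the discrepancy function
`ĝ(β) = bᵀ(βM + I)⁻²b` is convex and nonincreasing on `(0,∞)`; if moreover
`Mb ≠ 0`, it is strictly decreasing on `(0,∞)`. -/
theorem discrepancy_convex_antitone
    (m : ℕ) (M : Matrix (Fin m) (Fin m) ℝ) (b : Fin m → ℝ)
    (hM : M.PosSemidef) :
    ConvexOn ℝ (Ioi 0)
      (fun β : ℝ =>
        b ⬝ᵥ (((β • M + (1 : Matrix (Fin m) (Fin m) ℝ))⁻¹
          * (β • M + (1 : Matrix (Fin m) (Fin m) ℝ))⁻¹) *ᵥ b)) ∧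
    AntitoneOn
      (fun β : ℝ =>
        b ⬝ᵥ (((β • M + (1 : Matrix (Fin m) (Fin m) ℝ))⁻¹
          * (β • M + (1 : Matrix (Fin m) (Fin m) ℝ))⁻¹) *ᵥ b))
      (Ioi 0) ∧
    (M *ᵥ b ≠ 0 →
      StrictAntiOn
        (fun β : ℝ =>
          b ⬝ᵥ (((β • M + (1 : Matrix (Fin m) (Fin m) ℝ))⁻¹
            * (β • M + (1 : Matrix (Fin m) (Fin m) ℝ))⁻¹) *ᵥ b))
        (Ioi 0)) := by
  classical
  set U := (hM.1.eigenvectorUnitary : Matrix (Fin m) (Fin m) ℝ) with hU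
  set μ := hM.1.eigenvalues with hμ
  set c := star U *ᵥ b with hc
  have hUU : star U * U = 1 := Unitary.coe_star_mul_self _
  have hUU' : U * star U = 1 := Unitary.coe_mul_star_self _
  have hμ0 : ∀ i, 0 ≤ μ i := fun i => hM.eigenvalues_nonneg i
  have key : ∀ d1 d2 : Fin m → ℝ, (U * diagonal d1 * star U) * (U * diagonal d2 * star U)
      = U * diagonal (fun i => d1 i * d2 i) * star U := by
    intro d1 d2
    calc (U * diagonal d1 * star U) * (U * diagonal d2 * star U)
        = U * (diagonal d1 * ((star U * U) * (diagonal d2 * star U))) := by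
          simp only [Matrix.mul_assoc]
      _ = U * (diagonal d1 * diagonal d2) * star U := by
          rw [hUU, Matrix.one_mul]; simp only [Matrix.mul_assoc]
      _ = U * diagonal (fun i => d1 i * d2 i) * star U := by
          rw [diagonal_mul_diagonal]
  have hspec : M = U * diagonal μ * star U := by
    have := hM.1.spectral_theorem
    simpa using this
  have hinv : ∀ β : ℝ, 0 < β →
      (β • M + 1)⁻¹ = U * diagonal (fun i => (1 + β * μ i)⁻¹) * star U := by
    intro β hβ
    have hpos : ∀ i, 0 < 1 + β * μ i := fun i =>
      lt_add_of_lt_of_nonneg one_pos (mul_nonneg hβ.le (hμ0 i))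
    have hA : β • M + 1 = U * diagonal (fun i => 1 + β * μ i) * star U := by
      have h1 : diagonal (fun _ : Fin m => (1:ℝ)) + diagonal (fun i => β * μ i)
          = diagonal (fun i => 1 + β * μ i) := diagonal_add _ _
      rw [← h1, Matrix.mul_add, Matrix.add_mul, diagonal_one, Matrix.mul_one, hUU', add_comm]
      congr 1
      have h2 : (fun i => β * μ i) = β • μ := by funext i; simp
      rw [h2, diagonal_smul, Matrix.mul_smul, Matrix.smul_mul, ← hspec]
    rw [hA]
    apply inv_eq_right_inv
    rw [key]
    have : (fun i => (1 + β * μ i) * (1 + β * μ i)⁻¹) = fun _ => (1:ℝ) := by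
      funext i; exact mul_inv_cancel₀ (hpos i).ne'
    rw [this, diagonal_one, Matrix.mul_one, hUU']
  have hstarT : star U = Uᵀ := by
    ext i j; simp [Matrix.conjTranspose_apply]
  have hdot : ∀ d : Fin m → ℝ, b ⬝ᵥ ((U * diagonal d * star U) *ᵥ b)
      = ∑ i, d i * (c i)^2 := by
    intro d
    rw [← mulVec_mulVec, ← mulVec_mulVec, dotProduct_mulVec]
    have hbU : b ᵥ* U = c := by rw [hc, hstarT, ← Matrix.mulVec_transpose]
    rw [hbU]
    simp only [dotProduct, mulVec_diagonal]
    exact Finset.sum_congr rfl fun i _ => by ring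
  -- value of the function on Ioi 0
  set g : ℝ → ℝ := fun β => ∑ i, (c i)^2 * ((1 + β * μ i)⁻¹)^2 with hg
  have hEq : ∀ β : ℝ, β ∈ Ioi (0:ℝ) →
      b ⬝ᵥ (((β • M + (1 : Matrix (Fin m) (Fin m) ℝ))⁻¹
        * (β • M + (1 : Matrix (Fin m) (Fin m) ℝ))⁻¹) *ᵥ b) = g β := by
    intro β hβ
    rw [hinv β hβ, key, hdot]
    exact Finset.sum_congr rfl fun i _ => by ring
  -- convexity of g
  have hgconv : ConvexOn ℝ (Ioi 0) g := by
    refine ⟨convex_Ioi 0, ?_⟩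
    intro x hx y hy a bb ha hb hab
    simp only [smul_eq_mul, hg, Finset.mul_sum, ← Finset.sum_add_distrib]
    refine Finset.sum_le_sum fun i _ => ?_
    have hp : (1 + x * μ i) ∈ Ioi (0:ℝ) :=
      lt_add_of_lt_of_nonneg one_pos (mul_nonneg (le_of_lt hx) (hμ0 i))
    have hq : (1 + y * μ i) ∈ Ioi (0:ℝ) :=
      lt_add_of_lt_of_nonneg one_pos (mul_nonneg (le_of_lt hy) (hμ0 i))
    have hz := (convexOn_zpow (-2 : ℤ)).2 hp hq ha hb hab
    simp only [smul_eq_mul] at hz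
    have hcomb : a * (1 + x * μ i) + bb * (1 + y * μ i) = 1 + (a * x + bb * y) * μ i := by
      have : a + bb = 1 := hab; nlinarith [this]
    rw [hcomb] at hz
    have hrw : ∀ z : ℝ, 0 < z → z ^ (-2 : ℤ) = (z⁻¹)^2 := by
      intro z hz0; rw [inv_pow, _root_.zpow_neg, zpow_two, sq]
    have hcombpos : (0:ℝ) < 1 + (a * x + bb * y) * μ i := by
      have hx0 : (0:ℝ) < x := hx
      have hy0 : (0:ℝ) < y := hy
      have hx' : 0 < a * x + bb * y := by
        rcases lt_or_eq_of_le ha with h | h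
        · nlinarith
        · have hbb : bb = 1 := by linarith
          rw [← h, hbb]; simpa using hy0
      exact lt_add_of_lt_of_nonneg one_pos (mul_nonneg hx'.le (hμ0 i))
    rw [hrw _ hcombpos, hrw _ hp, hrw _ hq] at hz
    calc (c i)^2 * ((1 + (a * x + bb * y) * μ i)⁻¹)^2
        ≤ (c i)^2 * (a * ((1 + x * μ i)⁻¹)^2 + bb * ((1 + y * μ i)⁻¹)^2) :=
          mul_le_mul_of_nonneg_left hz (sq_nonneg _)
      _ = a * ((c i)^2 * ((1 + x * μ i)⁻¹)^2) + bb * ((c i)^2 * ((1 + y * μ i)⁻¹)^2) := by ring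
  -- antitone of g
  have hganti : AntitoneOn g (Ioi 0) := by
    intro x hx y hy hxy
    refine Finset.sum_le_sum fun i _ => ?_
    have hp : (0:ℝ) < 1 + x * μ i :=
      lt_add_of_lt_of_nonneg one_pos (mul_nonneg (le_of_lt hx) (hμ0 i))
    have hle : 1 + x * μ i ≤ 1 + y * μ i := by nlinarith [hμ0 i, mem_Ioi.mp hx]
    have hq' : (0:ℝ) < 1 + y * μ i :=
      lt_add_of_lt_of_nonneg one_pos (mul_nonneg (le_of_lt (mem_Ioi.mp hy)) (hμ0 i))
    refine mul_le_mul_of_nonneg_left ?_ (sq_nonneg _)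
    refine pow_le_pow_left₀ (inv_nonneg.mpr hq'.le) ?_ 2
    exact inv_anti₀ hp hle
  refine ⟨?_, ?_, ?_⟩
  · refine ⟨convex_Ioi 0, ?_⟩
    intro x hx y hy a bb ha hb hab
    have hmem : a • x + bb • y ∈ Ioi (0:ℝ) := (convex_Ioi 0) hx hy ha hb hab
    simp only [hEq _ hmem, hEq _ hx, hEq _ hy]
    exact hgconv.2 hx hy ha hb hab
  · intro x hx y hy hxy
    simp only [hEq _ hx, hEq _ hy]
    exact hganti hx hy hxy
  · intro hMb x hx y hy hxy
    simp only [hEq _ hx, hEq _ hy]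
    -- get an index with μ i > 0 and c i ≠ 0
    have hMbc : M *ᵥ b = U *ᵥ (diagonal μ *ᵥ c) := by
      rw [hspec, ← mulVec_mulVec, ← mulVec_mulVec, hc]
    obtain ⟨i₀, hi₀⟩ : ∃ i, μ i * c i ≠ 0 := by
      by_contra h
      push_neg at h
      apply hMb
      rw [hMbc]
      have : diagonal μ *ᵥ c = 0 := by
        funext j; simp [mulVec_diagonal, h j]
      rw [this, mulVec_zero]
    have hμpos : 0 < μ i₀ := lt_of_le_of_ne (hμ0 i₀) (fun h => hi₀ (by rw [← h]; ring))
    have hcpos : 0 < (c i₀)^2 := by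
      have : c i₀ ≠ 0 := fun h => hi₀ (by rw [h]; ring)
      positivity
    refine Finset.sum_lt_sum (fun i _ => ?_) ⟨i₀, Finset.mem_univ _, ?_⟩
    · have hp : (0:ℝ) < 1 + x * μ i :=
        lt_add_of_lt_of_nonneg one_pos (mul_nonneg (le_of_lt (mem_Ioi.mp hx)) (hμ0 i))
      have hle : 1 + x * μ i ≤ 1 + y * μ i := by nlinarith [hμ0 i]
      have hq' : (0:ℝ) < 1 + y * μ i :=
        lt_add_of_lt_of_nonneg one_pos (mul_nonneg (le_of_lt (mem_Ioi.mp hy)) (hμ0 i))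
      refine mul_le_mul_of_nonneg_left ?_ (sq_nonneg _)
      refine pow_le_pow_left₀ (inv_nonneg.mpr hq'.le) ?_ 2
      exact inv_anti₀ hp hle
    · have hp : (0:ℝ) < 1 + x * μ i₀ :=
        lt_add_of_lt_of_nonneg one_pos (mul_nonneg (le_of_lt (mem_Ioi.mp hx)) (hμ0 i₀))
      have hlt : 1 + x * μ i₀ < 1 + y * μ i₀ := by nlinarith
      refine mul_lt_mul_of_pos_left ?_ hcpos
      have hq' : (0:ℝ) < 1 + y * μ i₀ := by nlinarith [mem_Ioi.mp hy]
      refine pow_lt_pow_left₀ ?_ (inv_nonneg.mpr hq'.le) (by norm_num)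
      exact inv_strictAnti₀ hp hlt
end

section
/- Let A be a real m×n matrix, b ∈ ℝᵐ nonzero, k a positive integer, and α > 0. Suppose V is a real n×k matrix with orthonormal columns (VᵀV = I_k), U is a real m×(k+1) matrix with orthonormal columns (UᵀU = I_{k+1}), B̄ is a real (k+1)×k matrix with AV = UB̄, and Ue₁ = b/‖b‖. Let y(α) = (B̄ᵀB̄ + αI)⁻¹B̄ᵀ(‖b‖e₁) and x_k(α) = V y(α). Then ‖b − A x_k(α)‖² = α² ‖b‖² e₁ᵀ(B̄B̄ᵀ + αI)⁻²e₁, where e₁ is the first canonical basis vector of ℝ^{k+1} and ‖·‖ denotes the Euclidean norm. -/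
open Matrix

/-- The discrepancy of the projected Tikhonov solution equals the Gauss–Radau
quadrature value: with the Golub–Kahan partial factorization `AV = UB̄`,
`Ue₁ = b/‖b‖`, `y(α) = (B̄ᵀB̄ + αI)⁻¹B̄ᵀ(‖b‖e₁)` and `x_k(α) = Vy(α)`, one has
`‖b − A x_k(α)‖² = α² ‖b‖² e₁ᵀ(B̄B̄ᵀ + αI)⁻²e₁`. -/
theorem gkb_projected_tikhonov_discrepancy
    (m n k : ℕ) (hk : 0 < k)
    (A : Matrix (Fin m) (Fin n) ℝ) (b : Fin m → ℝ) (hb : b ≠ 0) (α : ℝ) (hα : 0 < α)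
    (V : Matrix (Fin n) (Fin k) ℝ) (U : Matrix (Fin m) (Fin (k + 1)) ℝ)
    (B : Matrix (Fin (k + 1)) (Fin k) ℝ)
    (hV : Vᵀ * V = 1) (hU : Uᵀ * U = 1) (hAV : A * V = U * B)
    (hU1 : U *ᵥ Pi.single (0 : Fin (k + 1)) (1 : ℝ)
      = fun i => b i / Real.sqrt (∑ j, b j ^ 2)) :
    ∑ i, (b - A *ᵥ (V *ᵥ
        ((Bᵀ * B + α • (1 : Matrix (Fin k) (Fin k) ℝ))⁻¹ *ᵥ
          (Bᵀ *ᵥ fun i => Real.sqrt (∑ j, b j ^ 2)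
            * (Pi.single (0 : Fin (k + 1)) (1 : ℝ) : Fin (k + 1) → ℝ) i)))) i ^ 2
      = α ^ 2 * (∑ j, b j ^ 2) *
        ((Pi.single (0 : Fin (k + 1)) (1 : ℝ) : Fin (k + 1) → ℝ) ⬝ᵥ
          (((B * Bᵀ + α • (1 : Matrix (Fin (k + 1)) (Fin (k + 1)) ℝ))⁻¹
            * (B * Bᵀ + α • (1 : Matrix (Fin (k + 1)) (Fin (k + 1)) ℝ))⁻¹) *ᵥ
              Pi.single (0 : Fin (k + 1)) (1 : ℝ))) := by
  haveI : Nonempty (Fin k) := ⟨⟨0, hk⟩⟩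
  set e : Fin (k + 1) → ℝ := Pi.single 0 1 with he
  set β : ℝ := Real.sqrt (∑ j, b j ^ 2) with hβdef
  have hsum_nonneg : (0 : ℝ) ≤ ∑ j, b j ^ 2 :=
    Finset.sum_nonneg fun j _ => sq_nonneg _
  have hsum_pos : (0 : ℝ) < ∑ j, b j ^ 2 := by
    rcases Function.ne_iff.mp hb with ⟨i, hi⟩
    exact Finset.sum_pos' (fun j _ => sq_nonneg _)
      ⟨i, Finset.mem_univ i,
        lt_of_le_of_ne (sq_nonneg _) (Ne.symm (pow_ne_zero 2 hi))⟩
  have hβpos : 0 < β := Real.sqrt_pos.mpr hsum_pos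
  have hβsq : β ^ 2 = ∑ j, b j ^ 2 := Real.sq_sqrt hsum_nonneg
  set M : Matrix (Fin k) (Fin k) ℝ := Bᵀ * B + α • 1 with hM
  set N : Matrix (Fin (k + 1)) (Fin (k + 1)) ℝ := B * Bᵀ + α • 1 with hN
  -- positive definiteness
  have hsmulPD : ∀ (p : ℕ), (α • (1 : Matrix (Fin p) (Fin p) ℝ)).PosDef := by
    intro p
    rw [Matrix.smul_one_eq_diagonal]
    exact Matrix.posDef_diagonal_iff.mpr fun _ => hα
  have hMpd : M.PosDef := by
    have h1 : (Bᵀ * B).PosSemidef := by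
      simpa using Matrix.posSemidef_conjTranspose_mul_self B
    exact Matrix.PosDef.posSemidef_add h1 (hsmulPD k)
  have hNpd : N.PosDef := by
    have h1 : (B * Bᵀ).PosSemidef := by
      simpa using Matrix.posSemidef_self_mul_conjTranspose B
    exact Matrix.PosDef.posSemidef_add h1 (hsmulPD (k + 1))
  have hMdet : IsUnit M.det := hMpd.det_pos.ne'.isUnit
  have hNdet : IsUnit N.det := hNpd.det_pos.ne'.isUnit
  -- abbreviations
  set y : Fin k → ℝ := M⁻¹ *ᵥ (Bᵀ *ᵥ fun i => β * e i) with hy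
  set w : Fin (k + 1) → ℝ := N⁻¹ *ᵥ e with hw
  -- generic helper facts (stated for arbitrary vectors to keep rewriting safe)
  have hNcancel : ∀ v : Fin (k + 1) → ℝ, N⁻¹ *ᵥ (N *ᵥ v) = v := fun v => by
    rw [Matrix.mulVec_mulVec, Matrix.nonsing_inv_mul N hNdet, Matrix.one_mulVec]
  have hAVv : ∀ v : Fin k → ℝ, A *ᵥ (V *ᵥ v) = U *ᵥ (B *ᵥ v) := fun v => by
    rw [Matrix.mulVec_mulVec, hAV, ← Matrix.mulVec_mulVec]
  have hNB : N * B = B * M := by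
    rw [hM, hN, Matrix.add_mul, Matrix.mul_add, Matrix.smul_mul, Matrix.mul_smul,
      Matrix.one_mul, Matrix.mul_one, Matrix.mul_assoc]
  have hNBv : ∀ v : Fin k → ℝ, N *ᵥ (B *ᵥ v) = B *ᵥ (M *ᵥ v) := fun v => by
    rw [Matrix.mulVec_mulVec, hNB, ← Matrix.mulVec_mulVec]
  have hUiso : ∀ v : Fin (k + 1) → ℝ, (U *ᵥ v) ⬝ᵥ (U *ᵥ v) = v ⬝ᵥ v := fun v => by
    rw [Matrix.dotProduct_mulVec, ← Matrix.mulVec_transpose, Matrix.mulVec_mulVec, hU,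
      Matrix.one_mulVec]
  -- b = β • (U *ᵥ e)
  have hbU : b = β • (U *ᵥ e) := by
    funext i
    rw [hU1]
    simp only [Pi.smul_apply, smul_eq_mul]
    field_simp
  -- M *ᵥ y = Bᵀ *ᵥ (β • e)
  have hMy : M *ᵥ y = Bᵀ *ᵥ (β • e) := by
    show M *ᵥ (M⁻¹ *ᵥ (Bᵀ *ᵥ (β • e))) = Bᵀ *ᵥ (β • e)
    rw [Matrix.mulVec_mulVec (Bᵀ *ᵥ (β • e)) M M⁻¹, Matrix.mul_nonsing_inv M hMdet,
      Matrix.one_mulVec]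
  -- key identity: the residual in the coordinates of U
  have h1 : N *ᵥ (β • e - B *ᵥ y) = (α * β) • e := by
    rw [Matrix.mulVec_sub, hNBv, hMy, Matrix.mulVec_mulVec, hN, Matrix.add_mulVec,
      Matrix.smul_mulVec, Matrix.one_mulVec, add_sub_cancel_left, smul_smul]
  have hkey : β • e - B *ᵥ y = (α * β) • w := by
    calc β • e - B *ᵥ y = N⁻¹ *ᵥ (N *ᵥ (β • e - B *ᵥ y)) := (hNcancel _).symm
      _ = (α * β) • w := by rw [h1, Matrix.mulVec_smul, hw]
  -- the residual
  have hres : b - A *ᵥ (V *ᵥ y) = (α * β) • (U *ᵥ w) := by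
    rw [hbU, hAVv, ← Matrix.mulVec_smul, ← Matrix.mulVec_sub, hkey, Matrix.mulVec_smul]
  -- symmetry of N⁻¹
  have hNsymm : Nᵀ = N := by
    rw [hN, Matrix.transpose_add, Matrix.transpose_mul, Matrix.transpose_transpose,
      Matrix.transpose_smul, Matrix.transpose_one]
  have hNinvT : N⁻¹ᵀ = N⁻¹ := by rw [Matrix.transpose_nonsing_inv, hNsymm]
  have hrhs : e ⬝ᵥ ((N⁻¹ * N⁻¹) *ᵥ e) = w ⬝ᵥ w := by
    rw [← Matrix.mulVec_mulVec, Matrix.dotProduct_mulVec, ← Matrix.mulVec_transpose, hNinvT]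
  calc ∑ i, (b - A *ᵥ (V *ᵥ y)) i ^ 2
      = (b - A *ᵥ (V *ᵥ y)) ⬝ᵥ (b - A *ᵥ (V *ᵥ y)) := by
        simp [dotProduct, pow_two]
    _ = (α * β) ^ 2 * (w ⬝ᵥ w) := by
        rw [hres, smul_dotProduct, dotProduct_smul, hUiso w,
          smul_eq_mul, smul_eq_mul]
        ring
    _ = α ^ 2 * (∑ j, b j ^ 2) * (e ⬝ᵥ ((N⁻¹ * N⁻¹) *ᵥ e)) := by
        rw [hrhs, mul_pow, hβsq]
end
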